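/- Let (p₀,q₀) = (1,0), (p₁,q₁) = (1,2), and let (p₀,q₀), (p₁,q₁), …, (p_n,q_n) be normalized primitive pairs with every qᵢ even, such that |pᵢq_{i+1} − p_{i+1}qᵢ| = 2 for all 0 ≤ i < n and (p_{i+1},q_{i+1}) ≠ (p_{i−1},q_{i−1}) for all 1 ≤ i < n. Then the pairs (p₀,q₀), …, (p_n,q_n) are pairwise distinct; in particular no minimal edge-path in W̄₁ starting at 1/0, 1/2 contains a cycle. -/
import Mathlib

/-- A normalized primitive pair: `p` and `q` are coprime and either `q > 0`, or
`q = 0` and `p = 1`. -/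
def NormalizedPrimitive (p q : ℤ) : Prop :=
  IsCoprime p q ∧ (0 < q ∨ (q = 0 ∧ p = 1))

lemma odd_of_coprime_even {p q : ℤ} (h : IsCoprime p q) (he : Even q) : Odd p := by
  rcases Int.even_or_odd p with hp | hp
  · exfalso
    have h2 : IsUnit (2 : ℤ) := h.isUnit_of_dvd' hp.two_dvd he.two_dvd
    rcases Int.isUnit_iff.mp h2 with h | h <;> omega
  · exact hp

lemma step_from_two {p a b : ℤ} (hp : Odd p) (hna : NormalizedPrimitive a b) (hb : Even b)
    (hadj : |p * b - a * 2| = 2) (hne : (a, b) ≠ (1, 0)) : 2 < b := by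
  obtain ⟨hcop, hpos⟩ := hna
  have hb0 : 0 < b := by
    rcases hpos with h | ⟨h1, h2⟩
    · exact h
    · exact absurd (by rw [h1, h2]) hne
  have hb2 : b ≠ 2 := by
    rintro rfl
    have ha : Odd a := odd_of_coprime_even hcop hb
    obtain ⟨k, hk⟩ := hp
    obtain ⟨m, hm⟩ := ha
    rcases (abs_eq (by norm_num : (0:ℤ) ≤ 2)).mp hadj with h | h <;> omega
  obtain ⟨m, hm⟩ := hb
  omega

lemma unique_small_neighbor {p q a b a' b' : ℤ}
    (hq : 4 ≤ q) (hcop : IsCoprime p q) (heq : Even q)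
    (hna : NormalizedPrimitive a b) (hna' : NormalizedPrimitive a' b')
    (hb : Even b) (hb' : Even b')
    (hble : b ≤ q) (hb'le : b' ≤ q)
    (hadj : |p * b - a * q| = 2) (hadj' : |p * b' - a' * q| = 2) :
    (a, b) = (a', b') := by
  obtain ⟨hc, hpos⟩ := hna
  obtain ⟨hc', hpos'⟩ := hna'
  have hb0 : 0 ≤ b := by rcases hpos with h | ⟨h, _⟩ <;> omega
  have hb'0 : 0 ≤ b' := by rcases hpos' with h | ⟨h, _⟩ <;> omega
  have hbpos : 0 < b := by
    rcases lt_or_eq_of_le hb0 with h | h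
    · exact h
    · exfalso
      have h2 : q ∣ 2 := by
        rcases (abs_eq (by norm_num : (0:ℤ) ≤ 2)).mp hadj with hh | hh
        · exact ⟨-a, by rw [← h] at hh; linear_combination -hh⟩
        · exact ⟨a, by rw [← h] at hh; linear_combination hh⟩
      have := Int.le_of_dvd (by norm_num) h2
      omega
  have hb'pos : 0 < b' := by
    rcases lt_or_eq_of_le hb'0 with h | h
    · exact h
    · exfalso
      have h2 : q ∣ 2 := by
        rcases (abs_eq (by norm_num : (0:ℤ) ≤ 2)).mp hadj' with hh | hh
        · exact ⟨-a', by rw [← h] at hh; linear_combination -hh⟩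
        · exact ⟨a', by rw [← h] at hh; linear_combination hh⟩
      have := Int.le_of_dvd (by norm_num) h2
      omega
  have hblt : b < q := by
    rcases lt_or_eq_of_le hble with h | h
    · exact h
    · exfalso
      have h2 : q ∣ 2 := by
        rcases (abs_eq (by norm_num : (0:ℤ) ≤ 2)).mp hadj with hh | hh
        · exact ⟨p - a, by rw [h] at hh; linear_combination -hh⟩
        · exact ⟨a - p, by rw [h] at hh; linear_combination hh⟩
      have := Int.le_of_dvd (by norm_num) h2
      omega
  have hb'lt : b' < q := by
    rcases lt_or_eq_of_le hb'le with h | h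
    · exact h
    · exfalso
      have h2 : q ∣ 2 := by
        rcases (abs_eq (by norm_num : (0:ℤ) ≤ 2)).mp hadj' with hh | hh
        · exact ⟨p - a', by rw [h] at hh; linear_combination -hh⟩
        · exact ⟨a' - p, by rw [h] at hh; linear_combination hh⟩
      have := Int.le_of_dvd (by norm_num) h2
      omega
  have hqp : IsCoprime q p := hcop.symm
  have same_sign : ∀ s : ℤ, p * b - a * q = s → p * b' - a' * q = s → (a, b) = (a', b') := by
    intro s h1 h2
    have hd : q ∣ (b - b') := by
      have : q ∣ (b - b') * p := ⟨a - a', by linear_combination h1 - h2⟩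
      exact hqp.dvd_of_dvd_mul_right this
    have hbb : b = b' := by
      rcases hd with ⟨k, hk⟩
      have hk1 : k = 0 := by nlinarith
      rw [hk1, mul_zero] at hk
      omega
    subst hbb
    have : a = a' := by
      have h3 : a * q = a' * q := by linarith
      exact mul_right_cancel₀ (by omega) h3
    rw [this]
  have opp_sign : ∀ s : ℤ, s = 2 ∨ s = -2 → p * b - a * q = s → p * b' - a' * q = -s → False := by
    intro s hs h1 h2
    have hd : q ∣ (b + b') := by
      have : q ∣ (b + b') * p := ⟨a + a', by linear_combination h1 + h2⟩
      exact hqp.dvd_of_dvd_mul_right this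
    have hsum : b + b' = q := by
      rcases hd with ⟨k, hk⟩
      have hk1 : k = 1 := by nlinarith
      rw [hk1, mul_one] at hk
      omega
    have hpaa : p = a + a' := by
      have h3 : p * q = (a + a') * q := by
        calc p * q = p * (b + b') := by rw [hsum]
        _ = (a + a') * q := by linear_combination h1 + h2
      exact mul_right_cancel₀ (by omega) h3
    have hodp : Odd p := odd_of_coprime_even hcop heq
    have hoda : Odd a := odd_of_coprime_even hc hb
    have hoda' : Odd a' := odd_of_coprime_even hc' hb'
    obtain ⟨x, hx⟩ := hodp; obtain ⟨y, hy⟩ := hoda; obtain ⟨z, hz⟩ := hoda'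
    omega
  rcases (abs_eq (by norm_num : (0:ℤ) ≤ 2)).mp hadj with h1 | h1 <;>
    rcases (abs_eq (by norm_num : (0:ℤ) ≤ 2)).mp hadj' with h2 | h2
  · exact same_sign 2 h1 h2
  · exact (opp_sign 2 (Or.inl rfl) h1 (by rw [h2])).elim
  · exact (opp_sign (-2) (Or.inr rfl) h1 (by rw [h2]; norm_num)).elim
  · exact same_sign (-2) h1 h2

/-- The vertices of a minimal edge-path in `W̄₁` starting at `1/0, 1/2` (a sequence of
normalized primitive pairs with even denominators, consecutive pairs satisfying
`|pᵢq_{i+1} − p_{i+1}qᵢ| = 2`, never immediately backtracking) are pairwise distinct;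
in particular no such minimal edge-path contains a cycle. -/
theorem minimal_path_no_cycle (n : ℕ) (hn : 1 ≤ n) (p q : ℕ → ℤ)
    (hp0 : p 0 = 1) (hq0 : q 0 = 0) (hp1 : p 1 = 1) (hq1 : q 1 = 2)
    (hnorm : ∀ i ≤ n, NormalizedPrimitive (p i) (q i))
    (heven : ∀ i ≤ n, Even (q i))
    (hadj : ∀ i < n, |p i * q (i + 1) - p (i + 1) * q i| = 2)
    (hmin : ∀ i, 1 ≤ i → i < n → (p (i + 1), q (i + 1)) ≠ (p (i - 1), q (i - 1))) :
    ∀ i ≤ n, ∀ j ≤ n, (p i, q i) = (p j, q j) → i = j := by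
  have key : ∀ i, 1 ≤ i → i ≤ n → q (i - 1) < q i := by
    intro i
    induction i with
    | zero => omega
    | succ k ih =>
      intro _ hkn
      rcases Nat.eq_or_lt_of_le (show 1 ≤ k + 1 from by omega) with h1 | h1
      · have : k = 0 := by omega
        subst this
        simp [hq0, hq1]
      · have hk1 : 1 ≤ k := by omega
        have ihk : q (k - 1) < q k := ih hk1 (by omega)
        have hkn' : k ≤ n := by omega
        have hqk_even : Even (q k) := heven k hkn'
        have hqk1_even : Even (q (k - 1)) := heven (k - 1) (by omega)
        have hqk1_nn : 0 ≤ q (k - 1) := by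
          rcases (hnorm (k - 1) (by omega)).2 with h | ⟨h, _⟩ <;> omega
        have hqk2 : 2 ≤ q k := by
          obtain ⟨m, hm⟩ := hqk_even; omega
        have hne := hmin k hk1 (by omega)
        have hadjk := hadj k (by omega)
        simp only [Nat.add_sub_cancel]
        rcases eq_or_lt_of_le hqk2 with h2 | h2
        · have hq0' : q (k - 1) = 0 := by
            obtain ⟨m, hm⟩ := hqk1_even; omega
          have hp0' : p (k - 1) = 1 := by
            rcases (hnorm (k - 1) (by omega)).2 with h | ⟨_, h⟩ <;> omega
          have hodp : Odd (p k) := odd_of_coprime_even (hnorm k hkn').1 hqk_even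
          have := step_from_two (p := p k) (a := p (k + 1)) (b := q (k + 1)) hodp
            (hnorm (k + 1) hkn) (heven (k + 1) hkn)
            (by rw [← h2] at hadjk; exact hadjk)
            (by rw [hp0', hq0'] at hne; exact hne)
          omega
        · have hq4 : 4 ≤ q k := by
            obtain ⟨m, hm⟩ := hqk_even; omega
          by_contra hcon
          push_neg at hcon
          have hadjprev := hadj (k - 1) (by omega)
          have hk1eq : k - 1 + 1 = k := by omega
          rw [hk1eq] at hadjprev
          have := unique_small_neighbor (p := p k) (q := q k)
            (a := p (k + 1)) (b := q (k + 1)) (a' := p (k - 1)) (b' := q (k - 1))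
            hq4 (hnorm k hkn').1 hqk_even
            (hnorm (k + 1) hkn) (hnorm (k - 1) (by omega))
            (heven (k + 1) hkn) hqk1_even
            hcon (le_of_lt ihk)
            hadjk
            (by rw [abs_sub_comm] at hadjprev; exact hadjprev)
          exact hne this
  have mono : ∀ j ≤ n, ∀ i < j, q i < q j := by
    intro j
    induction j with
    | zero => omega
    | succ m ih =>
      intro hjn i hij
      have hstep : q m < q (m + 1) := by
        have := key (m + 1) (by omega) hjn
        simpa using this
      rcases Nat.lt_succ_iff_lt_or_eq.mp hij with h | h
      · exact lt_trans (ih (by omega) i h) hstep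
      · rw [h]; exact hstep
  intro i hi j hj hpq
  have hq : q i = q j := by
    have := congrArg Prod.snd hpq
    simpa using this
  rcases lt_trichotomy i j with h | h | h
  · exact absurd hq (ne_of_lt (mono j hj i h))
  · exact h
  · exact absurd hq.symm (ne_of_lt (mono i hi j h))
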